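/- arXiv:2404.03038 — 3 statements merged into one kernel-verified Lean document; each statement's English description precedes it below -/
import Mathlib

section
/- (Pocklington primality criterion.) Let a, b, c be positive integers such that a² > c > 1, a divides c − 1, b^(c−1) ≡ 1 (mod c), and for every prime p dividing a one has gcd(b^((c−1)/p) − 1, c) = 1. Then c is prime. -/
/-! If `c` were composite, its least prime factor `q` would satisfy `q ≤ √c < a`. But the
hypotheses force the order of `b` modulo `q` to be a multiple of `a`: the element `b ^ ((c - 1) / a)`
has order exactly `a`, since `b ^ ((c - 1) / p) ≢ 1 (mod q)` for every prime `p ∣ a`. As this order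
divides `q - 1`, we get `a ≤ q - 1`, a contradiction. -/

theorem dvd_orderOf_of_pow_div_prime_ne_one {G : Type*} [Monoid G] {x : G} {n a : ℕ}
    (ha : 0 < a) (han : a ∣ n) (hx : x ^ n = 1)
    (hd : ∀ p : ℕ, p.Prime → p ∣ a → x ^ (n / p) ≠ 1) : a ∣ orderOf x := by
  have hpow : (x ^ (n / a)) ^ a = 1 := by rw [← pow_mul, Nat.div_mul_cancel han, hx]
  have horder : orderOf (x ^ (n / a)) = a := by
    refine orderOf_eq_of_pow_and_pow_div_prime ha hpow fun p hp hpa => ?_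
    rw [← pow_mul, Nat.div_mul_div_comm han hpa, mul_comm a, Nat.mul_div_mul_right _ _ ha]
    exact hd p hp hpa
  exact horder ▸ orderOf_pow_dvd _

theorem ZMod.natCast_ne_one_of_coprime_sub_one {m c q : ℕ} (hm : Nat.Coprime (m - 1) c)
    (hqc : q ∣ c) (hq : q ≠ 1) : (m : ZMod q) ≠ 1 := by
  intro h
  have hmod : m ≡ 1 [MOD q] := (ZMod.natCast_eq_natCast_iff _ _ _).mp (by simpa using h)
  have hqm : q ∣ m - 1 := Nat.dvd_of_mod_eq_zero (Nat.sub_mod_eq_zero_of_mod_eq hmod)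
  exact hq (Nat.eq_one_of_dvd_coprimes hm hqm hqc)

theorem Nat.dvd_sub_one_of_pocklington {a b c q : ℕ} (ha : 0 < a) (hc : 1 < c)
    (hac : a ∣ c - 1) (hb : b ^ (c - 1) ≡ 1 [MOD c])
    (hgcd : ∀ p : ℕ, p.Prime → p ∣ a → Nat.gcd (b ^ ((c - 1) / p) - 1) c = 1)
    (hq : q.Prime) (hqc : q ∣ c) : a ∣ q - 1 := by
  have := Fact.mk hq
  have hbq : (b : ZMod q) ^ (c - 1) = 1 := by
    exact_mod_cast (ZMod.natCast_eq_natCast_iff _ _ _).mpr (hb.of_dvd hqc)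
  have hb0 : (b : ZMod q) ≠ 0 := by
    intro h
    rw [h, zero_pow (by omega)] at hbq
    exact zero_ne_one hbq
  have hord : a ∣ orderOf (b : ZMod q) :=
    dvd_orderOf_of_pow_div_prime_ne_one ha hac hbq fun p hp hpa => by
      exact_mod_cast ZMod.natCast_ne_one_of_coprime_sub_one (hgcd p hp hpa) hqc hq.ne_one
  exact hord.trans (ZMod.orderOf_dvd_card_sub_one hb0)

theorem pocklington_general (a b c : ℕ) (ha : 0 < a)
    (h1 : c < a ^ 2) (h2 : 1 < c) (h3 : a ∣ c - 1)
    (h4 : b ^ (c - 1) ≡ 1 [MOD c])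
    (h5 : ∀ p : ℕ, p.Prime → p ∣ a → Nat.gcd (b ^ ((c - 1) / p) - 1) c = 1) :
    c.Prime := by
  by_contra hcp
  have hq : c.minFac.Prime := Nat.minFac_prime (by omega)
  have hqa : c.minFac < a := by
    have := Nat.minFac_sq_le_self (by omega) hcp
    exact lt_of_pow_lt_pow_left₀ 2 (Nat.zero_le a) (by omega)
  have haq := Nat.dvd_sub_one_of_pocklington ha h2 h3 h4 h5 hq (Nat.minFac_dvd c)
  have := Nat.le_of_dvd (by have := hq.two_le; omega) haq
  omega

/-- Pocklington primality criterion. -/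
theorem pocklington (a b c : ℕ) (ha : 0 < a) (hb : 0 < b) (hc : 0 < c)
    (h1 : c < a ^ 2) (h2 : 1 < c) (h3 : a ∣ c - 1)
    (h4 : b ^ (c - 1) ≡ 1 [MOD c])
    (h5 : ∀ p : ℕ, p.Prime → p ∣ a → Nat.gcd (b ^ ((c - 1) / p) - 1) c = 1) :
    c.Prime :=
  pocklington_general a b c ha h1 h2 h3 h4 h5
end

section
/- Let d ∈ ℕ be squarefree with d ≥ 2 and d ≡ 3 (mod 4), let c be a prime number and let e, f be positive integers with c·f + e² = d and gcd(c, 2e) = 1, and let P be the ideal of ℤ[√d] generated by c and e + √d. Suppose k, m are nonnegative integers and ℓ is a positive integer such that d = k·c^ℓ + (m·c + e)². Then P^ℓ equals the ideal of ℤ[√d] generated by c^ℓ and (m·c + e) + √d, and likewise the ℓ-th power of the ideal generated by c and e − √d equals the ideal generated by c^ℓ and (m·c + e) − √d. -/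
/-!
Put `a = m c + e`. Since `a ≡ e (mod c)`, the ideal `P = (c, e + √d)` is also `(c, a + √d)`, and
`(a + √d)(a - √d) = a² - d = -k c^ℓ`. Expanding `(c, a + √d)^ℓ` shows `P^ℓ ≤ (c^ℓ, a + √d)`.
Conversely, `P` is coprime to `a - √d` because `c` is coprime to `(a + √d) + (a - √d) = 2a`;
hence so is `P^ℓ`, and `a + √d ∈ P^ℓ` follows from `(a + √d)(a - √d) ∈ (c^ℓ) ≤ P^ℓ`.
Replacing `√d` by `-√d` gives the conjugate statement.
-/

namespace Ideal

section CommSemiring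

variable {R : Type*} [CommSemiring R]

theorem sup_pow_le_pow_sup (I J : Ideal R) (n : ℕ) : (I ⊔ J) ^ n ≤ I ^ n ⊔ J := by
  induction n with
  | zero => simp [one_eq_top]
  | succ n ih =>
    calc (I ⊔ J) ^ (n + 1) ≤ (I ^ n ⊔ J) * (I ⊔ J) := by rw [pow_succ]; exact mul_mono_left ih
      _ ≤ I ^ (n + 1) ⊔ J := by
        rw [sup_mul, mul_sup, pow_succ]
        exact sup_le (sup_le_sup_left mul_le_right _) (mul_le_left.trans le_sup_right)

theorem le_of_mul_le_of_sup_eq_top {I J K : Ideal R} (h : I ⊔ J = ⊤) (hKJ : K * J ≤ I) :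
    K ≤ I :=
  calc K = K * (I ⊔ J) := by rw [h, mul_top]
    _ = K * I ⊔ K * J := mul_sup K I J
    _ ≤ I := sup_le mul_le_right hKJ

end CommSemiring

section CommRing

variable {R : Type*} [CommRing R]

theorem span_pair_sup_span_singleton_eq_top {x y z : R} (h : IsCoprime x (y + z)) :
    span {x, y} ⊔ span {z} = ⊤ := by
  obtain ⟨u, v, huv⟩ := h
  rw [eq_top_iff_one, ← huv]
  exact Submodule.mem_sup.2 ⟨u * x + v * y, mem_span_pair.2 ⟨u, v, rfl⟩,
    v * z, mem_span_singleton'.2 ⟨v, rfl⟩, by ring⟩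

theorem span_pair_pow_eq_of_isCoprime {x y z : R} (n : ℕ) (hyz : y * z ∈ span {x ^ n})
    (hcop : IsCoprime x (y + z)) : span {x, y} ^ n = span {x ^ n, y} := by
  apply le_antisymm
  · calc span {x, y} ^ n = (span {x} ⊔ span {y}) ^ n := by rw [span_insert]
      _ ≤ span {x} ^ n ⊔ span {y} := sup_pow_le_pow_sup _ _ n
      _ = span {x ^ n, y} := by rw [span_singleton_pow, span_insert]
  · have hxn : x ^ n ∈ span {x, y} ^ n := pow_mem_pow (subset_span (by simp)) n
    have hy : span {y} ≤ span {x, y} ^ n := by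
      refine le_of_mul_le_of_sup_eq_top
        (pow_sup_eq_top (span_pair_sup_span_singleton_eq_top hcop)) ?_
      rw [span_singleton_mul_span_singleton, span_singleton_le_iff_mem]
      exact span_le.2 (by simpa using hxn) hyz
    rw [span_insert]
    exact sup_le ((span_singleton_le_iff_mem _).2 hxn) hy

end CommRing

end Ideal

theorem pow_of_split_prime_ideal_in_Zsqrtd_general (d : ℕ) (c e : ℕ) (hgcd : Nat.gcd c (2 * e) = 1)
    (k m ℓ : ℕ) (hkml : d = k * c ^ ℓ + (m * c + e) ^ 2) :
    (Ideal.span {(c : ℤ√(d : ℤ)), (e : ℤ√(d : ℤ)) + Zsqrtd.sqrtd}) ^ ℓ =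
      Ideal.span {((c : ℤ√(d : ℤ))) ^ ℓ, ((m * c + e : ℕ) : ℤ√(d : ℤ)) + Zsqrtd.sqrtd} ∧
    (Ideal.span {(c : ℤ√(d : ℤ)), (e : ℤ√(d : ℤ)) - Zsqrtd.sqrtd}) ^ ℓ =
      Ideal.span {((c : ℤ√(d : ℤ))) ^ ℓ, ((m * c + e : ℕ) : ℤ√(d : ℤ)) - Zsqrtd.sqrtd} := by
  set a : ℤ√(d : ℤ) := ((m * c + e : ℕ) : ℤ√(d : ℤ))
  have hshift (s : ℤ√(d : ℤ)) : Ideal.span {(c : ℤ√(d : ℤ)), (e : ℤ√(d : ℤ)) + s} =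
      Ideal.span {(c : ℤ√(d : ℤ)), a + s} := by
    rw [show a + s = (e + s) + m * c by push_cast [a]; ring, Ideal.span_pair_add_mul_left]
  have hcop : IsCoprime (c : ℤ√(d : ℤ)) (2 * a) := by
    have : Nat.Coprime c (2 * (m * c + e)) := by
      rw [show 2 * (m * c + e) = 2 * e + c * (2 * m) by ring]
      exact (Nat.coprime_add_mul_left_right _ _ _).2 hgcd
    simpa [a] using this.cast (R := ℤ√(d : ℤ))
  have hnorm : (a + Zsqrtd.sqrtd) * (a - Zsqrtd.sqrtd) ∈ Ideal.span {(c : ℤ√(d : ℤ)) ^ ℓ} := by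
    have hd : ((d : ℤ) : ℤ√(d : ℤ)) = k * c ^ ℓ + a ^ 2 := by
      have := congrArg (Nat.cast : ℕ → ℤ√(d : ℤ)) hkml
      push_cast [a] at this ⊢
      exact this
    exact Ideal.mem_span_singleton'.2
      ⟨-k, by linear_combination hd + Zsqrtd.dmuld (d := (d : ℤ))⟩
  constructor
  · rw [hshift]
    refine Ideal.span_pair_pow_eq_of_isCoprime ℓ hnorm ?_
    rwa [add_add_sub_cancel, ← two_mul]
  · rw [sub_eq_add_neg, hshift, ← sub_eq_add_neg]
    refine Ideal.span_pair_pow_eq_of_isCoprime ℓ (by rwa [mul_comm]) ?_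
    rwa [sub_add_add_cancel, ← two_mul]

theorem pow_of_split_prime_ideal_in_Zsqrtd (d : ℕ) (hdsf : Squarefree d) (hd2 : 2 ≤ d)
    (hd4 : d % 4 = 3) (c e f : ℕ) (hc : c.Prime) (he : 0 < e) (hf : 0 < f)
    (hcef : c * f + e ^ 2 = d) (hgcd : Nat.gcd c (2 * e) = 1)
    (k m ℓ : ℕ) (hℓ : 0 < ℓ) (hkml : d = k * c ^ ℓ + (m * c + e) ^ 2) :
    (Ideal.span {(c : ℤ√(d : ℤ)), (e : ℤ√(d : ℤ)) + Zsqrtd.sqrtd}) ^ ℓ =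
      Ideal.span {((c : ℤ√(d : ℤ))) ^ ℓ, ((m * c + e : ℕ) : ℤ√(d : ℤ)) + Zsqrtd.sqrtd} ∧
    (Ideal.span {(c : ℤ√(d : ℤ)), (e : ℤ√(d : ℤ)) - Zsqrtd.sqrtd}) ^ ℓ =
      Ideal.span {((c : ℤ√(d : ℤ))) ^ ℓ, ((m * c + e : ℕ) : ℤ√(d : ℤ)) - Zsqrtd.sqrtd} :=
  pow_of_split_prime_ideal_in_Zsqrtd_general d c e hgcd k m ℓ hkml
end

section
/- Let d ∈ ℕ be a prime with d ≡ 3 (mod 4), and let ε be a unit of ℤ[√d] whose image ε_ℝ in ℝ is greater than 1 and minimal among the real images of all units of ℤ[√d] that are greater than 1 (the fundamental unit). Suppose η is a unit of ℤ[√d] whose real image η_ℝ satisfies η_ℝ > 0, η_ℝ ≠ 1 and ε_ℝ^(−d) < η_ℝ < ε_ℝ^d, and such that d divides η.im. Then d divides ε.im. -/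
/-!
Since `ε` is fundamental, `η = ε ^ k` with `k ≠ 0` and `|k| < d`; as `η⁻¹ = ± star η` has the
same imaginary part up to sign, we may take `k > 0`. Modulo `d` we have `√d ^ 2 ≡ 0`, so
`(a + b√d) ^ k ≡ a ^ k + k a ^ (k - 1) b √d`. Here `d ∤ a` (otherwise `d` divides the norm `±1`)
and `d ∤ k`, so `d ∣ (ε ^ k).im` forces `d ∣ b`.
-/

section FundamentalUnit

variable {K G : Type*} [Field K] [LinearOrder K] [IsStrictOrderedRing K] [Archimedean K]
  [Group G]

theorem exists_eq_zpow_of_forall_one_lt_le (f : G →* K) (hf : Function.Injective f) {ε η : G}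
    (hε : 1 < f ε) (hεmin : ∀ ζ, 1 < f ζ → f ε ≤ f ζ) (hη : 0 < f η) :
    ∃ k : ℤ, η = ε ^ k := by
  obtain ⟨k, hk1, hk2⟩ := exists_mem_Ico_zpow hη hε
  refine ⟨k, ?_⟩
  have hεk : 0 < f ε ^ k := zpow_pos (one_pos.trans hε) k
  have hζ : f (η * (ε ^ k)⁻¹) = f η / f ε ^ k := by
    rw [map_mul, map_inv, map_zpow, div_eq_mul_inv]
  have h1 : 1 ≤ f (η * (ε ^ k)⁻¹) := by rwa [hζ, one_le_div hεk]
  have h2 : f (η * (ε ^ k)⁻¹) < f ε := by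
    rwa [hζ, div_lt_iff₀ hεk, mul_comm, ← zpow_add_one₀ (one_pos.trans hε).ne']
  have h3 : f (η * (ε ^ k)⁻¹) = f 1 := by
    rw [map_one]
    exact (h1.eq_of_not_lt fun h => (hεmin _ h).not_gt h2).symm
  exact mul_inv_eq_one.mp (hf h3)

end FundamentalUnit

namespace Zsqrtd

variable {d : ℤ}

theorem re_pow_modEq (z : ℤ√d) (n : ℕ) : (z ^ n).re ≡ z.re ^ n [ZMOD d] := by
  induction n with
  | zero => simp [Int.ModEq]
  | succ n ih =>
    calc (z ^ (n + 1)).re = (z ^ n).re * z.re + d * ((z ^ n).im * z.im) := by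
          rw [pow_succ, re_mul]; ring
      _ ≡ (z ^ n).re * z.re [ZMOD d] := Int.modEq_add_fac_self
      _ ≡ z.re ^ n * z.re [ZMOD d] := ih.mul_right _
      _ = z.re ^ (n + 1) := (pow_succ _ _).symm

theorem im_pow_succ_modEq (z : ℤ√d) (n : ℕ) :
    (z ^ (n + 1)).im ≡ (n + 1) * z.re ^ n * z.im [ZMOD d] := by
  induction n with
  | zero => simp
  | succ n ih =>
    calc (z ^ (n + 1 + 1)).im = (z ^ (n + 1)).re * z.im + (z ^ (n + 1)).im * z.re := by
          rw [pow_succ _ (n + 1), im_mul]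
      _ ≡ z.re ^ (n + 1) * z.im + (n + 1) * z.re ^ n * z.im * z.re [ZMOD d] :=
          ((re_pow_modEq z _).mul_right _).add (ih.mul_right _)
      _ = (↑(n + 1) + 1) * z.re ^ (n + 1) * z.im := by push_cast; ring

theorem not_dvd_re_of_isUnit (hd : ¬IsUnit d) {z : ℤ√d} (hz : IsUnit z) : ¬d ∣ z.re := by
  intro h
  have hnorm : d ∣ z.norm := by
    rw [norm_def]
    exact dvd_sub (h.mul_right _) ((dvd_mul_right _ _).mul_right _)
  exact hd (isUnit_of_dvd_unit hnorm ((isUnit_iff_norm_isUnit z).mp hz))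

theorem val_inv_eq_norm_mul_star (u : (ℤ√d)ˣ) :
    ((u⁻¹ : (ℤ√d)ˣ) : ℤ√d) = (u : ℤ√d).norm * star (u : ℤ√d) := by
  refine Units.inv_eq_of_mul_eq_one_right ?_
  have hnorm : (u : ℤ√d).norm * (u : ℤ√d).norm = 1 :=
    Int.isUnit_mul_self ((isUnit_iff_norm_isUnit _).mp u.isUnit)
  rw [mul_left_comm, ← norm_eq_mul_conj, ← Int.cast_mul, hnorm, Int.cast_one]

theorem dvd_im_inv_of_dvd_im {m : ℤ} {u : (ℤ√d)ˣ} (h : m ∣ (u : ℤ√d).im) :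
    m ∣ ((u⁻¹ : (ℤ√d)ˣ) : ℤ√d).im := by
  rw [val_inv_eq_norm_mul_star]
  simpa using h.neg_right.mul_left _

theorem dvd_im_of_dvd_im_pow {p : ℤ} (hp : Prime p) {z : ℤ√p} (hre : ¬p ∣ z.re) {n : ℕ}
    (hn : ¬p ∣ n) (h : p ∣ (z ^ n).im) : p ∣ z.im := by
  obtain ⟨m, rfl⟩ := Nat.exists_eq_succ_of_ne_zero (n := n) (by rintro rfl; exact hn (dvd_zero p))
  have hdvd := (im_pow_succ_modEq z m).dvd_iff.mp h
  push_cast at hn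
  rcases hp.dvd_mul.mp hdvd with h' | h'
  · rcases hp.dvd_mul.mp h' with h'' | h''
    · exact absurd h'' hn
    · exact absurd (hp.dvd_of_dvd_pow h'') hre
  · exact h'

end Zsqrtd

theorem d_dvd_im_fundamental_of_special_unit_general (d : ℕ) (hd : d.Prime)
    (ε η : (ℤ√(d : ℤ))ˣ)
    (hε1 : 1 < Zsqrtd.toReal (Int.natCast_nonneg d) (ε : ℤ√(d : ℤ)))
    (hεmin : ∀ ζ : (ℤ√(d : ℤ))ˣ,
        1 < Zsqrtd.toReal (Int.natCast_nonneg d) (ζ : ℤ√(d : ℤ)) →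
        Zsqrtd.toReal (Int.natCast_nonneg d) (ε : ℤ√(d : ℤ)) ≤
          Zsqrtd.toReal (Int.natCast_nonneg d) (ζ : ℤ√(d : ℤ)))
    (hηpos : 0 < Zsqrtd.toReal (Int.natCast_nonneg d) (η : ℤ√(d : ℤ)))
    (hηne : Zsqrtd.toReal (Int.natCast_nonneg d) (η : ℤ√(d : ℤ)) ≠ 1)
    (hηlb : (Zsqrtd.toReal (Int.natCast_nonneg d) (ε : ℤ√(d : ℤ))) ^ (-(d : ℤ)) <
      Zsqrtd.toReal (Int.natCast_nonneg d) (η : ℤ√(d : ℤ)))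
    (hηub : Zsqrtd.toReal (Int.natCast_nonneg d) (η : ℤ√(d : ℤ)) <
      (Zsqrtd.toReal (Int.natCast_nonneg d) (ε : ℤ√(d : ℤ))) ^ (d : ℤ))
    (hηim : (d : ℤ) ∣ (η : ℤ√(d : ℤ)).im) :
    (d : ℤ) ∣ (ε : ℤ√(d : ℤ)).im := by
  have hp : Prime (d : ℤ) := Nat.prime_iff_prime_int.mp hd
  let f : (ℤ√(d : ℤ))ˣ →* ℝ :=
    (Zsqrtd.toReal (Int.natCast_nonneg d)).toMonoidHom.comp (Units.coeHom _)
  have hnsq : ∀ n : ℤ, (d : ℤ) ≠ n * n := fun n hn => hp.irreducible.not_isSquare ⟨n, hn⟩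
  have hf : Function.Injective f :=
    (Zsqrtd.toReal_injective (Int.natCast_nonneg d) hnsq).comp Units.val_injective
  obtain ⟨k, rfl⟩ := exists_eq_zpow_of_forall_one_lt_le f hf hε1 hεmin hηpos
  change f (ε ^ k) ≠ 1 at hηne
  change f ε ^ (-(d : ℤ)) < f (ε ^ k) at hηlb
  change f (ε ^ k) < f ε ^ (d : ℤ) at hηub
  rw [map_zpow] at hηne hηlb hηub
  have hk0 : k ≠ 0 := by rintro rfl; exact hηne (zpow_zero _)
  have hkd : -(d : ℤ) < k ∧ k < d :=
    ⟨(zpow_lt_zpow_iff_right₀ hε1).mp hηlb, (zpow_lt_zpow_iff_right₀ hε1).mp hηub⟩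
  obtain ⟨n, hkn⟩ := k.eq_nat_or_neg
  have hn0 : n ≠ 0 := by omega
  have hnd : n < d := by omega
  have hn : ¬(d : ℤ) ∣ n := fun h =>
    hn0 (Nat.eq_zero_of_dvd_of_lt (Int.natCast_dvd_natCast.mp h) hnd)
  have hεn : (d : ℤ) ∣ ((ε : ℤ√(d : ℤ)) ^ n).im := by
    rw [← Units.val_pow_eq_pow_val, ← zpow_natCast]
    rcases hkn with rfl | rfl
    · exact hηim
    · simpa using Zsqrtd.dvd_im_inv_of_dvd_im hηim
  exact Zsqrtd.dvd_im_of_dvd_im_pow hp (Zsqrtd.not_dvd_re_of_isUnit hp.not_isUnit ε.isUnit) hn hεn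

theorem d_dvd_im_fundamental_of_special_unit (d : ℕ) (hd : d.Prime) (hd4 : d % 4 = 3)
    (ε η : (ℤ√(d : ℤ))ˣ)
    (hε1 : 1 < Zsqrtd.toReal (Int.natCast_nonneg d) (ε : ℤ√(d : ℤ)))
    (hεmin : ∀ ζ : (ℤ√(d : ℤ))ˣ,
        1 < Zsqrtd.toReal (Int.natCast_nonneg d) (ζ : ℤ√(d : ℤ)) →
        Zsqrtd.toReal (Int.natCast_nonneg d) (ε : ℤ√(d : ℤ)) ≤
          Zsqrtd.toReal (Int.natCast_nonneg d) (ζ : ℤ√(d : ℤ)))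
    (hηpos : 0 < Zsqrtd.toReal (Int.natCast_nonneg d) (η : ℤ√(d : ℤ)))
    (hηne : Zsqrtd.toReal (Int.natCast_nonneg d) (η : ℤ√(d : ℤ)) ≠ 1)
    (hηlb : (Zsqrtd.toReal (Int.natCast_nonneg d) (ε : ℤ√(d : ℤ))) ^ (-(d : ℤ)) <
      Zsqrtd.toReal (Int.natCast_nonneg d) (η : ℤ√(d : ℤ)))
    (hηub : Zsqrtd.toReal (Int.natCast_nonneg d) (η : ℤ√(d : ℤ)) <
      (Zsqrtd.toReal (Int.natCast_nonneg d) (ε : ℤ√(d : ℤ))) ^ (d : ℤ))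
    (hηim : (d : ℤ) ∣ (η : ℤ√(d : ℤ)).im) :
    (d : ℤ) ∣ (ε : ℤ√(d : ℤ)).im :=
  d_dvd_im_fundamental_of_special_unit_general d hd ε η hε1 hεmin hηpos hηne hηlb hηub hηim
end
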